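/- Let D ≥ 3 and let α, β ∈ ℝ. On the vector space a = so(D) ⊕ ℝ^D ⊕ ℝ, with elements written A + P_v + cH (A ∈ so(D), v ∈ ℝ^D, c ∈ ℝ), define the skew-symmetric bilinear bracket by [A,A'] = AA' − A'A, [A,P_v] = P_{Av}, [A,H] = 0, [H,P_v] = αP_v, and [P_u,P_v] = β(uvᵀ − vuᵀ) ∈ so(D). Then this bracket satisfies the Jacobi identity (i.e., makes a a Lie algebra) if and only if αβ = 0. -/

import Mathlib

open Matrix

noncomputable section

namespace Stmt14

/-- `so(D)`: the real skew-symmetric `D × D` matrices. -/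
def soD (D : ℕ) : Submodule ℝ (Matrix (Fin D) (Fin D) ℝ) where
  carrier := {M | Mᵀ = -M}
  add_mem' := fun {a b} ha hb => by
    simp only [Set.mem_setOf_eq] at ha hb ⊢
    rw [Matrix.transpose_add, ha, hb, neg_add]
  zero_mem' := by simp only [Set.mem_setOf_eq, Matrix.transpose_zero, neg_zero]
  smul_mem' := fun c a ha => by
    simp only [Set.mem_setOf_eq] at ha ⊢
    rw [Matrix.transpose_smul, ha, smul_neg]

theorem mem_soD {D : ℕ} {M : Matrix (Fin D) (Fin D) ℝ} : M ∈ soD D ↔ Mᵀ = -M := Iff.rfl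

/-- The commutator `AA' − A'A` of two skew-symmetric matrices, as an element of `so(D)`. -/
def soComm {D : ℕ} (A B : soD D) : soD D :=
  ⟨A.val * B.val - B.val * A.val, by
    have hA : (A.val)ᵀ = -A.val := A.2
    have hB : (B.val)ᵀ = -B.val := B.2
    rw [mem_soD, Matrix.transpose_sub, Matrix.transpose_mul, Matrix.transpose_mul, hA, hB,
      neg_mul_neg, neg_mul_neg, neg_sub]⟩

/-- `uvᵀ − vuᵀ` as an element of `so(D)`. -/
def outer {D : ℕ} (u v : Fin D → ℝ) : soD D :=
  ⟨vecMulVec u v - vecMulVec v u, by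
    rw [mem_soD]
    ext i j
    simp only [Matrix.transpose_apply, Matrix.sub_apply, Matrix.neg_apply, Matrix.vecMulVec_apply]
    ring⟩

/-- The underlying vector space `a = so(D) ⊕ ℝ^D ⊕ ℝ`, an element `(A, v, c)` standing
for `A + P_v + cH`. -/
abbrev AV (D : ℕ) := soD D × (Fin D → ℝ) × ℝ

/-- The skew-symmetric bilinear bracket on `a` determined by `[A,A'] = AA' − A'A`,
`[A,P_v] = P_{Av}`, `[A,H] = 0`, `[H,P_v] = αP_v` and `[P_u,P_v] = β(uvᵀ − vuᵀ)`. -/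
def ariBr {D : ℕ} (α β : ℝ) (X Y : AV D) : AV D :=
  (soComm X.1 Y.1 + β • outer X.2.1 Y.2.1,
   X.1.val.mulVec Y.2.1 - Y.1.val.mulVec X.2.1 + (α * X.2.2) • Y.2.1 - (α * Y.2.2) • X.2.1,
   0)

end Stmt14

/-!
Expanding the cyclic sum, in the `so(D)` component the matrix Jacobi identity and the
equivariance `[A, uvᵀ - vuᵀ] = (Au)vᵀ - v(Au)ᵀ + u(Av)ᵀ - (Av)uᵀ` of skew-symmetric `A` cancel
everything except `2αβ (a(vwᵀ - wvᵀ) + b(wuᵀ - uwᵀ) + c(uvᵀ - vuᵀ))`; in the vector component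
the cyclic sum of `(uvᵀ - vuᵀ)w` vanishes and the `α` terms cancel in pairs. Evaluating on
`H, P_{e₀}, P_{e₁}` leaves `2αβ (e₀e₁ᵀ - e₁e₀ᵀ)`, which is nonzero unless `αβ = 0`.
-/

namespace Stmt14

variable {D : ℕ}

theorem vecMul_eq_neg_mulVec {A : Matrix (Fin D) (Fin D) ℝ} (hA : A ∈ soD D) (v : Fin D → ℝ) :
    v ᵥ* A = -(A *ᵥ v) := by
  rw [← mulVec_transpose, mem_soD.mp hA, neg_mulVec]

theorem coe_outer (u v : Fin D → ℝ) :
    (outer u v : Matrix (Fin D) (Fin D) ℝ) = vecMulVec u v - vecMulVec v u := rfl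

theorem coe_soComm (A B : soD D) :
    (soComm A B : Matrix (Fin D) (Fin D) ℝ) = A * B - B * A := rfl

theorem outer_mulVec (u v w : Fin D → ℝ) :
    (outer u v : Matrix (Fin D) (Fin D) ℝ) *ᵥ w = (v ⬝ᵥ w) • u - (u ⬝ᵥ w) • v := by
  simp [coe_outer, sub_mulVec, vecMulVec_mulVec]

theorem outer_single_ne_zero {i j : Fin D} (hij : i ≠ j) :
    outer (Pi.single i (1 : ℝ)) (Pi.single j 1) ≠ 0 := by
  intro h
  have := congrArg (fun M : soD D => (M : Matrix (Fin D) (Fin D) ℝ) i j) h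
  simp [coe_outer, vecMulVec_apply, hij] at this

def jacobiator (α β : ℝ) (X Y Z : AV D) : AV D :=
  ariBr α β (ariBr α β X Y) Z + ariBr α β (ariBr α β Y Z) X + ariBr α β (ariBr α β Z X) Y

theorem jacobiator_eq (α β : ℝ) (A B C : soD D) (u v w : Fin D → ℝ) (a b c : ℝ) :
    jacobiator α β (A, u, a) (B, v, b) (C, w, c) =
      ((2 * α * β) • (a • outer v w + b • outer w u + c • outer u v), 0, 0) := by
  refine Prod.ext ?_ (Prod.ext ?_ ?_)
  · ext : 1
    simp only [jacobiator, ariBr, Prod.fst_add, Submodule.coe_add, SetLike.val_smul, coe_soComm,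
      coe_outer, sub_mul, mul_sub, add_mul, mul_add, smul_mul_assoc, mul_smul_comm, mul_assoc,
      vecMulVec_mul, mul_vecMulVec, vecMul_eq_neg_mulVec A.2, vecMul_eq_neg_mulVec B.2,
      vecMul_eq_neg_mulVec C.2, add_vecMulVec, vecMulVec_add, sub_vecMulVec, vecMulVec_sub,
      vecMulVec_neg, smul_vecMulVec, vecMulVec_smul, mulVec_add, mulVec_sub, mulVec_smul]
    module
  · simp only [jacobiator, ariBr, Prod.snd_add, Prod.fst_add, Submodule.coe_add, SetLike.val_smul,
      coe_soComm, add_mulVec, sub_mulVec, smul_mulVec, ← mulVec_mulVec, outer_mulVec, mulVec_add,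
      mulVec_sub, mulVec_smul, dotProduct_comm, mul_zero, zero_smul, add_zero]
    module
  · simp [jacobiator, ariBr]

end Stmt14

open Stmt14 in
/-- For `D ≥ 3`, the bracket on `so(D) ⊕ ℝ^D ⊕ ℝ` given by `[A,A'] = AA' − A'A`,
`[A,P_v] = P_{Av}`, `[A,H] = 0`, `[H,P_v] = αP_v`, `[P_u,P_v] = β(uvᵀ − vuᵀ)` satisfies the
Jacobi identity (i.e., makes `a` a Lie algebra) if and only if `αβ = 0`. -/
theorem stmt14 (D : ℕ) (hD : 3 ≤ D) (α β : ℝ) :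
    (∀ X Y Z : AV D,
        ariBr α β (ariBr α β X Y) Z + ariBr α β (ariBr α β Y Z) X
          + ariBr α β (ariBr α β Z X) Y = 0) ↔ α * β = 0 := by
  refine ⟨fun hJ => ?_, fun hαβ ⟨A, u, a⟩ ⟨B, v, b⟩ ⟨C, w, c⟩ => ?_⟩
  · let i : Fin D := ⟨0, by omega⟩
    let j : Fin D := ⟨1, by omega⟩
    have hJac : jacobiator α β (0, 0, 1) (0, Pi.single i 1, 0) (0, Pi.single j 1, 0) = 0 := hJ _ _ _
    rw [jacobiator_eq] at hJac
    have hsmul : (2 * α * β) • outer (Pi.single i (1 : ℝ)) (Pi.single j 1) = 0 := by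
      simpa using congrArg Prod.fst hJac
    rcases smul_eq_zero.mp hsmul with h | h
    · linarith
    · exact absurd h (outer_single_ne_zero (by simp [i, j]))
  · change jacobiator α β _ _ _ = 0
    simp [jacobiator_eq, mul_assoc, hαβ]
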